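/- Let D be a finite set equipped with a score function S : D → ℝ, let k be a positive integer with k ≤ |D|, and let D = D_1 ∪ … ∪ D_N be a partition of D into pairwise disjoint blocks. For each l ∈ {1,…,N}, let A_l ⊆ D_l be a subset with |A_l| = min(k, |D_l|) such that S(a) ≥ S(b) for every a ∈ A_l and every b ∈ D_l \ A_l. Then there exists a top-k answer set A of D with A ⊆ A_1 ∪ … ∪ A_N; that is, the union of the per-partition top-k candidate sets contains a complete set of top-k answers for the whole database. -/

import Mathlib

/-!
Let `U` be the union of the per-block candidate sets. An element `b ∈ D \ U` lies in some block
`Dl l` without being among its candidates, so that block is larger than `k` and its candidate set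
is a `k`-element subset of `U` whose scores all dominate `S b`. Hence a top-`k` set of `U` (which
exists, e.g. as a `k`-subset of maximal total score) is already a top-`k` set of `D`: any
`b ∈ D \ U` is beaten by some element of `U` outside the answer set, or by the whole answer set.
-/

def IsTopK {α : Type*} [DecidableEq α] (S : α → ℝ) (D : Finset α) (k : ℕ)
    (A : Finset α) : Prop :=
  A ⊆ D ∧ A.card = k ∧ ∀ a ∈ A, ∀ b ∈ D \ A, S b ≤ S a

section

open Finset

variable {α : Type*} [DecidableEq α] {S : α → ℝ} {D U : Finset α} {k : ℕ}

theorem exists_isTopK (hk : k ≤ D.card) : ∃ A, IsTopK S D k A := by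
  obtain ⟨A₀, hA₀⟩ := exists_subset_card_eq hk
  obtain ⟨A, hA, hmax⟩ := exists_max_image (D.powersetCard k) (fun A => ∑ a ∈ A, S a)
    ⟨A₀, mem_powersetCard.2 hA₀⟩
  obtain ⟨hAD, hAcard⟩ := mem_powersetCard.1 hA
  refine ⟨A, hAD, hAcard, fun a ha b hb => ?_⟩
  obtain ⟨hbD, hbA⟩ := mem_sdiff.1 hb
  have hbA' : b ∉ A.erase a := fun h => hbA (mem_of_mem_erase h)
  -- Otherwise exchanging `a` for `b` would increase the total score.
  have hswap : insert b (A.erase a) ∈ D.powersetCard k := by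
    refine mem_powersetCard.2 ⟨insert_subset hbD ((erase_subset a A).trans hAD), ?_⟩
    rw [card_insert_of_notMem hbA', card_erase_of_mem ha, hAcard,
      Nat.sub_add_cancel (hAcard ▸ card_pos.2 ⟨a, ha⟩)]
  have hle := hmax _ hswap
  rw [sum_insert hbA', ← add_sum_erase A S ha] at hle
  linarith

theorem IsTopK.of_dominated {A : Finset α} (hUD : U ⊆ D) (hA : IsTopK S U k A)
    (hdom : ∀ b ∈ D \ U, ∃ C ⊆ U, k ≤ C.card ∧ ∀ c ∈ C, S b ≤ S c) :
    IsTopK S D k A := by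
  obtain ⟨hAU, hAcard, hAtop⟩ := hA
  refine ⟨hAU.trans hUD, hAcard, fun a ha b hb => ?_⟩
  obtain ⟨hbD, hbA⟩ := mem_sdiff.1 hb
  by_cases hbU : b ∈ U
  · exact hAtop a ha b (mem_sdiff.2 ⟨hbU, hbA⟩)
  obtain ⟨C, hCU, hkC, hC⟩ := hdom b (mem_sdiff.2 ⟨hbD, hbU⟩)
  by_cases hCA : C ⊆ A
  · have hCeq : C = A := eq_of_subset_of_card_le hCA (hAcard ▸ hkC)
    exact hC a (hCeq ▸ ha)
  · obtain ⟨c, hcC, hcA⟩ := not_subset.1 hCA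
    exact (hC c hcC).trans (hAtop a ha c (mem_sdiff.2 ⟨hCU hcC, hcA⟩))

theorem exists_isTopK_subset_of_dominated (hUD : U ⊆ D) (hkD : k ≤ D.card)
    (hdom : ∀ b ∈ D \ U, ∃ C ⊆ U, k ≤ C.card ∧ ∀ c ∈ C, S b ≤ S c) :
    ∃ A, IsTopK S D k A ∧ A ⊆ U := by
  have hkU : k ≤ U.card := by
    by_cases hDU : D ⊆ U
    · exact hkD.trans (card_le_card hDU)
    · obtain ⟨b, hbD, hbU⟩ := not_subset.1 hDU
      obtain ⟨C, hCU, hkC, -⟩ := hdom b (mem_sdiff.2 ⟨hbD, hbU⟩)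
      exact hkC.trans (card_le_card hCU)
  obtain ⟨A, hA⟩ := exists_isTopK (S := S) hkU
  exact ⟨A, hA.of_dominated hUD hdom, hA.1⟩

theorem card_eq_of_card_eq_min_of_mem_sdiff {A B : Finset α} {b : α} (hAB : A ⊆ B)
    (hA : A.card = min k B.card) (hb : b ∈ B \ A) : A.card = k := by
  have hlt : A.card < B.card := card_lt_card ((ssubset_iff_of_subset hAB).2 ⟨b, mem_sdiff.1 hb⟩)
  omega

end

theorem stmt_13_general {α : Type*} [DecidableEq α] (S : α → ℝ) (D : Finset α)
    (k : ℕ) (hkD : k ≤ D.card)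
    (N : ℕ) (Dl : Fin N → Finset α)
    (hunion : Finset.univ.biUnion Dl = D)
    (Al : Fin N → Finset α)
    (hAlsub : ∀ l, Al l ⊆ Dl l)
    (hAlcard : ∀ l, (Al l).card = min k (Dl l).card)
    (hAltop : ∀ l, ∀ a ∈ Al l, ∀ b ∈ Dl l \ Al l, S b ≤ S a) :
    ∃ A : Finset α, IsTopK S D k A ∧ A ⊆ Finset.univ.biUnion Al := by
  subst hunion
  refine exists_isTopK_subset_of_dominated (Finset.biUnion_mono fun l _ => hAlsub l) hkD ?_
  intro b hb
  obtain ⟨hbD, hbU⟩ := Finset.mem_sdiff.1 hb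
  obtain ⟨l, -, hbl⟩ := Finset.mem_biUnion.1 hbD
  have hAlU : Al l ⊆ Finset.univ.biUnion Al := Finset.subset_biUnion_of_mem Al (Finset.mem_univ l)
  have hbl' : b ∈ Dl l \ Al l := Finset.mem_sdiff.2 ⟨hbl, fun h => hbU (hAlU h)⟩
  exact ⟨Al l, hAlU, (card_eq_of_card_eq_min_of_mem_sdiff (hAlsub l) (hAlcard l) hbl').ge,
    fun a ha => hAltop l a ha b hbl'⟩

/-- if `D` is partitioned into pairwise disjoint blocks
`Dl 1, …, Dl N`, and `Al l` is a top-`min k |Dl l|` answer set of block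
`Dl l`, then the union of the per-partition candidate sets contains a
complete top-k answer set of `D`. -/
theorem stmt_13 {α : Type*} [DecidableEq α] (S : α → ℝ) (D : Finset α)
    (k : ℕ) (hk : 0 < k) (hkD : k ≤ D.card)
    (N : ℕ) (Dl : Fin N → Finset α)
    (hdisj : ∀ l l' : Fin N, l ≠ l' → Disjoint (Dl l) (Dl l'))
    (hunion : Finset.univ.biUnion Dl = D)
    (Al : Fin N → Finset α)
    (hAlsub : ∀ l, Al l ⊆ Dl l)
    (hAlcard : ∀ l, (Al l).card = min k (Dl l).card)
    (hAltop : ∀ l, ∀ a ∈ Al l, ∀ b ∈ Dl l \ Al l, S b ≤ S a) :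
    ∃ A : Finset α, IsTopK S D k A ∧ A ⊆ Finset.univ.biUnion Al :=
  stmt_13_general S D k hkD N Dl hunion Al hAlsub hAlcard hAltop
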